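/- Let n ≥ 2, let A be a real n×n singular irreducible M-matrix, and let L_G and U_G be the FSAI factors associated with admissible patterns S_L and S_U. Let B be the leading principal submatrix of A of order n−1, and let L_F and U_F be the FSAI factors of B computed with the restricted patterns S_L ∩ {(i,j) : i,j ≤ n−1} and S_U ∩ {(i,j) : i,j ≤ n−1}, i.e., L_F is lower triangular with (L_F)_{ij} = 0 for (i,j) outside the restricted pattern and (L_F B)_{ij} = δ_{ij} on the restricted pattern, and analogously (B U_F)_{ij} = δ_{ij}. Then the leading principal submatrix of order n−1 of L_G A U_G equals L_F B U_F. -/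

import Mathlib

open Matrix

/-- The spectral radius of a real matrix: the maximum modulus of its complex
eigenvalues (supremum of moduli of elements of the complex spectrum). -/
noncomputable def specRad {n : ℕ} (B : Matrix (Fin n) (Fin n) ℝ) : ℝ :=
  sSup ((fun z : ℂ => ‖z‖) '' spectrum ℂ (B.map Complex.ofReal))

/-- A real square matrix is a Z-matrix if its off-diagonal entries are nonpositive. -/
def IsZMatrix {n : ℕ} (A : Matrix (Fin n) (Fin n) ℝ) : Prop :=
  ∀ i j, i ≠ j → A i j ≤ 0

/-- A Z-matrix `A` is a nonsingular M-matrix if `A = s • 1 - B` with `B`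
entrywise nonnegative and `s > ρ(B)`. -/
def IsNonsingularMMatrix {n : ℕ} (A : Matrix (Fin n) (Fin n) ℝ) : Prop :=
  IsZMatrix A ∧ ∃ (s : ℝ) (B : Matrix (Fin n) (Fin n) ℝ),
    (∀ i j, 0 ≤ B i j) ∧ specRad B < s ∧ A = s • (1 : Matrix (Fin n) (Fin n) ℝ) - B

/-- A Z-matrix `A` is a singular M-matrix if `A = ρ(B) • 1 - B` with `B`
entrywise nonnegative. -/
def IsSingularMMatrix {n : ℕ} (A : Matrix (Fin n) (Fin n) ℝ) : Prop :=
  IsZMatrix A ∧ ∃ B : Matrix (Fin n) (Fin n) ℝ,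
    (∀ i j, 0 ≤ B i j) ∧ A = specRad B • (1 : Matrix (Fin n) (Fin n) ℝ) - B

/-- A matrix is irreducible if its directed graph (edge `i → j` iff `A i j ≠ 0`)
is strongly connected. -/
def IsIrreducibleMatrix {n : ℕ} (A : Matrix (Fin n) (Fin n) ℝ) : Prop :=
  ∀ i j : Fin n, Relation.ReflTransGen (fun a b : Fin n => A a b ≠ 0) i j

/-- Lower triangular real matrix. -/
def IsLowerTri {n : ℕ} (L : Matrix (Fin n) (Fin n) ℝ) : Prop :=
  ∀ i j : Fin n, i < j → L i j = 0

/-- Upper triangular real matrix. -/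
def IsUpperTri {n : ℕ} (U : Matrix (Fin n) (Fin n) ℝ) : Prop :=
  ∀ i j : Fin n, j < i → U i j = 0

/-- `L` is an FSAI lower triangular factor of `A` for the pattern `S`:
`L` is lower triangular, vanishes off the pattern, and `(L * A) i j = δ i j`
on the pattern. -/
def IsFSAILowerFactor {n : ℕ} (A L : Matrix (Fin n) (Fin n) ℝ)
    (S : Set (Fin n × Fin n)) : Prop :=
  IsLowerTri L ∧ (∀ p : Fin n × Fin n, p ∉ S → L p.1 p.2 = 0) ∧
    ∀ p : Fin n × Fin n, p ∈ S → (L * A) p.1 p.2 = if p.1 = p.2 then 1 else 0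

/-- `U` is an FSAI upper triangular factor of `A` for the pattern `S`:
`U` is upper triangular, vanishes off the pattern, and `(A * U) i j = δ i j`
on the pattern. -/
def IsFSAIUpperFactor {n : ℕ} (A U : Matrix (Fin n) (Fin n) ℝ)
    (S : Set (Fin n × Fin n)) : Prop :=
  IsUpperTri U ∧ (∀ p : Fin n × Fin n, p ∉ S → U p.1 p.2 = 0) ∧
    ∀ p : Fin n × Fin n, p ∈ S → (A * U) p.1 p.2 = if p.1 = p.2 then 1 else 0

/-!
Since `L` is lower and `U` upper triangular, the leading block of `L A U` is `L' B U'`, where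
`L'` and `U'` are the leading blocks of `L` and `U`; they satisfy the FSAI conditions for `B`
on the restricted patterns. These conditions determine a factor row by row (column by column)
through principal subsystems of `B`, which are proper principal submatrices of `A` and hence
nonsingular. Indeed, write `A = ρ(C) I - C` with `C ≥ 0`. A kernel vector `x` of such a
submatrix gives, after taking absolute values and extending by zero, a vector `z ≥ 0` with a
zero entry and `ρ(C) z ≤ C z`. The Collatz–Wielandt bound (via Gelfand's formula) and
irreducibility force `C z = ρ(C) z`, and then irreducibility spreads the zero entry to all of
`z`, so `x = 0`.
-/

open Finset

lemma specRad_nonneg {n : ℕ} (C : Matrix (Fin n) (Fin n) ℝ) : 0 ≤ specRad C :=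
  Real.sSup_nonneg <| by rintro _ ⟨z, -, rfl⟩; exact norm_nonneg z

section SpectralRadius

attribute [local instance] Matrix.linftyOpNormedAddCommGroup Matrix.linftyOpNormedRing
  Matrix.linftyOpNormedAlgebra

variable {n : ℕ} {C : Matrix (Fin n) (Fin n) ℝ}

lemma spectralRadius_map_ofReal_le_specRad (C : Matrix (Fin n) (Fin n) ℝ) :
    spectralRadius ℂ (C.map Complex.ofReal) ≤ ENNReal.ofReal (specRad C) := by
  obtain ⟨R, hR⟩ := (Metric.isBounded_iff_subset_closedBall 0).1
    (spectrum.isBounded (𝕜 := ℂ) (C.map Complex.ofReal))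
  have hbdd : BddAbove ((fun z : ℂ => ‖z‖) '' spectrum ℂ (C.map Complex.ofReal)) := by
    refine ⟨R, ?_⟩
    rintro _ ⟨z, hz, rfl⟩
    simpa using hR hz
  refine iSup₂_le fun z hz => ?_
  rw [← enorm_eq_nnnorm, ← ofReal_norm]
  exact ENNReal.ofReal_le_ofReal (le_csSup hbdd ⟨z, hz, rfl⟩)

/-- Gelfand's formula, with the row-sum norm bounded below by the `i`-th row sum. -/
lemma le_specRad_of_pow_le_sum_pow_apply (hC : ∀ i j, 0 ≤ C i j) {s : ℝ} (hs : 0 ≤ s)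
    (i : Fin n) (h : ∀ m : ℕ, s ^ m ≤ ∑ j, (C ^ m) i j) : s ≤ specRad C := by
  set M := C.map Complex.ofReal
  have hnorm (m : ℕ) : s ^ m ≤ ‖M ^ m‖ := by
    have hM : M ^ m = (C ^ m).map Complex.ofReal :=
      (map_pow Complex.ofRealHom.mapMatrix C m).symm
    calc s ^ m ≤ ∑ j, (C ^ m) i j := h m
      _ = ((∑ j, ‖(M ^ m) i j‖₊ : NNReal) : ℝ) := by
        push_cast
        refine sum_congr rfl fun j _ => ?_
        rw [hM, Matrix.map_apply, Complex.norm_real, Real.norm_eq_abs,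
          abs_of_nonneg (Matrix.pow_apply_nonneg hC m i j)]
      _ ≤ ‖M ^ m‖ := by
        rw [Matrix.linfty_opNorm_def]
        exact_mod_cast le_sup (f := fun i => ∑ j, ‖(M ^ m) i j‖₊) (mem_univ i)
  have hge : ENNReal.ofReal s ≤ spectralRadius ℂ M := by
    refine ge_of_tendsto (spectrum.pow_nnnorm_pow_one_div_tendsto_nhds_spectralRadius M) ?_
    filter_upwards [Filter.eventually_ge_atTop 1] with m hm
    have hm0 : (m : ℝ) ≠ 0 := by positivity
    calc ENNReal.ofReal s = (ENNReal.ofReal s ^ m) ^ (1 / (m : ℝ)) := by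
          rw [← ENNReal.rpow_natCast, ← ENNReal.rpow_mul, mul_one_div_cancel hm0,
            ENNReal.rpow_one]
      _ ≤ (‖M ^ m‖₊ : ENNReal) ^ (1 / (m : ℝ)) := by
          refine ENNReal.rpow_le_rpow ?_ (by positivity)
          rw [← ENNReal.ofReal_pow hs, ← enorm_eq_nnnorm, ← ofReal_norm]
          exact ENNReal.ofReal_le_ofReal (hnorm m)
  exact (ENNReal.ofReal_le_ofReal_iff (specRad_nonneg C)).1
    (hge.trans (spectralRadius_map_ofReal_le_specRad C))

end SpectralRadius

section Nonneg

variable {ι : Type*} [Fintype ι]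

lemma mulVec_mono_of_nonneg {M : Matrix ι ι ℝ} (hM : ∀ i j, 0 ≤ M i j) {x y : ι → ℝ}
    (hxy : x ≤ y) : M *ᵥ x ≤ M *ᵥ y :=
  fun i => sum_le_sum fun j _ => mul_le_mul_of_nonneg_left (hxy j) (hM i j)

lemma mulVec_apply_pos {P : Matrix ι ι ℝ} (hP : ∀ i j, 0 < P i j) {z : ι → ℝ} (hz : 0 ≤ z)
    (hz0 : z ≠ 0) (i : ι) : 0 < (P *ᵥ z) i := by
  obtain ⟨j, hj⟩ := Function.ne_iff.1 hz0
  exact (mul_pos (hP i j) ((hz j).lt_of_ne' hj)).trans_le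
    (single_le_sum (fun k _ => mul_nonneg (hP i k).le (hz k)) (mem_univ j))

variable {C : Matrix ι ι ℝ}

/-- Zeros of a nonnegative eigenvector propagate along the edges of the graph of `C`. -/
lemma eq_zero_of_mulVec_eq_smul (hC : ∀ i j, 0 ≤ C i j)
    (hconn : ∀ i j, Relation.ReflTransGen (fun a b => C a b ≠ 0) i j) {z : ι → ℝ} (hz : 0 ≤ z)
    {r : ℝ} (h : C *ᵥ z = r • z) {i₀ : ι} (hi₀ : z i₀ = 0) : z = 0 := by
  funext j
  induction hconn i₀ j with
  | refl => exact hi₀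
  | @tail b c _ hbc ih =>
    have hrow : ∑ k, C b k * z k = 0 := by simpa [mulVec, dotProduct, ih] using congrFun h b
    have hterm := (sum_eq_zero_iff_of_nonneg fun k _ => mul_nonneg (hC b k) (hz k)).1 hrow c
      (mem_univ c)
    exact (mul_eq_zero.1 hterm).resolve_left hbc

variable [DecidableEq ι]

lemma exists_pow_one_add_apply_pos (hC : ∀ i j, 0 ≤ C i j)
    (hconn : ∀ i j, Relation.ReflTransGen (fun a b => C a b ≠ 0) i j) (i j : ι) :
    ∃ m : ℕ, 0 < ((1 + C) ^ m) i j := by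
  have hP : ∀ a b, 0 ≤ (1 + C) a b := fun a b => add_nonneg (zero_le_one_elem a b) (hC a b)
  induction hconn i j with
  | refl => exact ⟨0, by simp⟩
  | @tail b c _ hbc ih =>
    obtain ⟨m, hm⟩ := ih
    have hbc' : 0 < (1 + C) b c :=
      ((hC b c).lt_of_ne' hbc).trans_le (le_add_of_nonneg_left (zero_le_one_elem b c))
    refine ⟨m + 1, ?_⟩
    rw [pow_succ, mul_apply]
    exact (mul_pos hm hbc').trans_le (single_le_sum
      (fun k _ => mul_nonneg (pow_apply_nonneg hP m i k) (hP k c)) (mem_univ b))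

/-- `P = ∑ (1 + C) ^ m(i, j)`, where the `(i, j)` entry of the `(i, j)`-th summand is positive. -/
lemma exists_commute_forall_apply_pos (hC : ∀ i j, 0 ≤ C i j)
    (hconn : ∀ i j, Relation.ReflTransGen (fun a b => C a b ≠ 0) i j) :
    ∃ P : Matrix ι ι ℝ, Commute C P ∧ ∀ i j, 0 < P i j := by
  have hP : ∀ a b, 0 ≤ (1 + C) a b := fun a b => add_nonneg (zero_le_one_elem a b) (hC a b)
  choose m hm using exists_pow_one_add_apply_pos hC hconn
  refine ⟨∑ p : ι × ι, (1 + C) ^ m p.1 p.2, Commute.sum_right _ _ _ fun p _ =>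
    ((Commute.one_right C).add_right (Commute.refl C)).pow_right _, fun i j => ?_⟩
  rw [Matrix.sum_apply]
  exact (hm i j).trans_le (single_le_sum (f := fun p : ι × ι => ((1 + C) ^ m p.1 p.2) i j)
    (fun p _ => pow_apply_nonneg hP _ i j) (mem_univ (i, j)))

end Nonneg

section CollatzWielandt

variable {n : ℕ} {C : Matrix (Fin n) (Fin n) ℝ}

lemma le_specRad_of_smul_le_mulVec (hC : ∀ i j, 0 ≤ C i j) {w : Fin n → ℝ} (hw : 0 ≤ w)
    (hw0 : w ≠ 0) {s : ℝ} (h : s • w ≤ C *ᵥ w) : s ≤ specRad C := by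
  rcases le_or_gt s 0 with hs | hs
  · exact hs.trans (specRad_nonneg C)
  have hpow (m : ℕ) : s ^ m • w ≤ (C ^ m) *ᵥ w := by
    induction m with
    | zero => simp
    | succ m ih =>
      calc s ^ (m + 1) • w = s • s ^ m • w := by rw [pow_succ', mul_smul]
        _ ≤ s • ((C ^ m) *ᵥ w) := smul_le_smul_of_nonneg_left ih hs.le
        _ = (C ^ m) *ᵥ (s • w) := (mulVec_smul _ _ _).symm
        _ ≤ (C ^ m) *ᵥ (C *ᵥ w) := mulVec_mono_of_nonneg (pow_apply_nonneg hC m) h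
        _ = (C ^ (m + 1)) *ᵥ w := by rw [mulVec_mulVec, pow_succ]
  obtain ⟨j, hj⟩ := Function.ne_iff.1 hw0
  have : Nonempty (Fin n) := ⟨j⟩
  obtain ⟨i, hi⟩ := Finite.exists_max w
  have hwi : 0 < w i := ((hw j).lt_of_ne' hj).trans_le (hi j)
  refine le_specRad_of_pow_le_sum_pow_apply hC hs.le i fun m => ?_
  refine le_of_mul_le_mul_right ?_ hwi
  calc s ^ m * w i ≤ ((C ^ m) *ᵥ w) i := hpow m i
    _ ≤ ∑ k, (C ^ m) i k * w i := by
      simp only [mulVec, dotProduct]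
      exact sum_le_sum fun k _ => mul_le_mul_of_nonneg_left (hi k) (pow_apply_nonneg hC m i k)
    _ = (∑ k, (C ^ m) i k) * w i := (sum_mul _ _ _).symm

/-- If `ρ(C) z ≤ C z` were strict somewhere, then `w = P z` for a positive `P` commuting with
`C` would satisfy `(ρ(C) + ε) w ≤ C w`, contradicting the Collatz–Wielandt bound. -/
lemma mulVec_eq_specRad_smul_of_le (hC : ∀ i j, 0 ≤ C i j)
    (hconn : ∀ i j, Relation.ReflTransGen (fun a b => C a b ≠ 0) i j) {z : Fin n → ℝ}
    (hz : 0 ≤ z) (h : specRad C • z ≤ C *ᵥ z) : C *ᵥ z = specRad C • z := by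
  by_contra hne
  set r := specRad C
  obtain ⟨P, hPC, hP⟩ := exists_commute_forall_apply_pos hC hconn
  have hz0 : z ≠ 0 := by rintro rfl; simp at hne
  set w := P *ᵥ z
  have hw : ∀ i, 0 < w i := mulVec_apply_pos hP hz hz0
  have hgap : C *ᵥ w - r • w = P *ᵥ (C *ᵥ z - r • z) := by
    rw [mulVec_sub, mulVec_smul, mulVec_mulVec, mulVec_mulVec, hPC.eq]
  have hgap_pos : ∀ i, 0 < (C *ᵥ w - r • w) i :=
    hgap ▸ mulVec_apply_pos hP (sub_nonneg.2 h) (sub_ne_zero.2 hne)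
  obtain ⟨j, -⟩ := Function.ne_iff.1 hz0
  have : Nonempty (Fin n) := ⟨j⟩
  obtain ⟨i₀, hi₀⟩ := Finite.exists_min fun i => (C *ᵥ w - r • w) i / w i
  set ε := (C *ᵥ w - r • w) i₀ / w i₀
  have hε : 0 < ε := div_pos (hgap_pos i₀) (hw i₀)
  have hsub : (r + ε) • w ≤ C *ᵥ w := fun i => by
    have := (le_div_iff₀ (hw i)).1 (hi₀ i)
    simp only [Pi.smul_apply, Pi.sub_apply, smul_eq_mul] at this ⊢
    linarith
  linarith [le_specRad_of_smul_le_mulVec hC (fun i => (hw i).le)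
    (fun h0 => (hw j).ne' (congrFun h0 j)) hsub]

end CollatzWielandt

lemma IsSingularMMatrix.det_submatrix_ne_zero {n : ℕ} {A : Matrix (Fin n) (Fin n) ℝ}
    (hA : IsSingularMMatrix A) (hirr : IsIrreducibleMatrix A) {κ : Type*} [Fintype κ]
    [DecidableEq κ] {e : κ → Fin n} (he : Function.Injective e) {i₀ : Fin n}
    (hi₀ : i₀ ∉ Set.range e) : (A.submatrix e e).det ≠ 0 := by
  obtain ⟨-, C, hC, rfl⟩ := hA
  set r := specRad C
  have hconn (i j : Fin n) : Relation.ReflTransGen (fun a b => C a b ≠ 0) i j := by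
    refine (hirr i j).lift' id fun a b hab => ?_
    by_cases hba : a = b
    · exact hba ▸ Relation.ReflTransGen.refl
    · refine Relation.ReflTransGen.single fun hC0 => hab ?_
      simp [hba, show C a b = 0 from hC0]
  intro hdet
  obtain ⟨x, hx0, hx⟩ := exists_mulVec_eq_zero_iff.2 hdet
  have hCx : C.submatrix e e *ᵥ x = r • x := by
    have hsub : (r • 1 - C).submatrix e e = r • 1 - C.submatrix e e := by
      rw [← submatrix_one e he]; rfl
    rw [hsub, sub_mulVec, smul_mulVec, one_mulVec, sub_eq_zero] at hx
    exact hx.symm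
  set z : Fin n → ℝ := Function.extend e (fun a => |x a|) 0
  have hze (a : κ) : z (e a) = |x a| := he.extend_apply _ _ a
  have hz_off {i : Fin n} (hi : i ∉ Set.range e) : z i = 0 := Function.extend_apply' _ _ i hi
  have hz : 0 ≤ z := fun i => by
    by_cases hi : i ∈ Set.range e
    · obtain ⟨a, rfl⟩ := hi
      exact (hze a).symm ▸ abs_nonneg (x a)
    · exact (hz_off hi).ge
  have hle : r • z ≤ C *ᵥ z := fun i => by
    by_cases hi : i ∈ Set.range e
    · obtain ⟨a, rfl⟩ := hi
      calc (r • z) (e a) = |(C.submatrix e e *ᵥ x) a| := by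
            rw [hCx, Pi.smul_apply, Pi.smul_apply, hze, smul_eq_mul, smul_eq_mul, abs_mul,
              abs_of_nonneg (specRad_nonneg C)]
        _ ≤ ∑ b, C (e a) (e b) * |x b| := by
            refine (abs_sum_le_sum_abs _ _).trans_eq (sum_congr rfl fun b _ => ?_)
            show |C (e a) (e b) * x b| = _
            rw [abs_mul, abs_of_nonneg (hC _ _)]
        _ = (C *ᵥ z) (e a) := Fintype.sum_of_injective e he _ _
            (fun j hj => by rw [hz_off hj, mul_zero]) fun b => by rw [hze]
    · rw [Pi.smul_apply, hz_off hi, smul_zero]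
      simpa using mulVec_mono_of_nonneg hC hz i
  have hz_zero := eq_zero_of_mulVec_eq_smul hC hconn hz
    (mulVec_eq_specRad_smul_of_le hC hconn hz hle) (hz_off hi₀)
  obtain ⟨a, ha⟩ := Function.ne_iff.1 hx0
  exact ha (abs_eq_zero.1 ((hze a).symm.trans (congrFun hz_zero (e a))))

section PrincipalSubmatrices

variable {K ι : Type*} [Field K] [DecidableEq ι]

def HasNonsingularPrincipalSubmatrices (B : Matrix ι ι K) : Prop :=
  ∀ T : Finset ι, (B.submatrix ((↑) : T → ι) (↑)).det ≠ 0

lemma HasNonsingularPrincipalSubmatrices.transpose {B : Matrix ι ι K}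
    (hB : HasNonsingularPrincipalSubmatrices B) : HasNonsingularPrincipalSubmatrices Bᵀ :=
  fun T => by rw [← transpose_submatrix, det_transpose]; exact hB T

lemma eq_zero_of_vecMul_apply_eq_zero [Fintype ι] {B : Matrix ι ι K} {T : Finset ι}
    (hT : (B.submatrix ((↑) : T → ι) (↑)).det ≠ 0) {x : ι → K} (hx : ∀ k ∉ T, x k = 0)
    (hxB : ∀ k ∈ T, (x ᵥ* B) k = 0) : x = 0 := by
  have hrestr : (fun k : T => x k) ᵥ* B.submatrix ((↑) : T → ι) ((↑) : T → ι) = 0 := by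
    funext k
    refine Eq.trans ?_ (hxB k k.2)
    exact Fintype.sum_of_injective _ Subtype.val_injective _ _
      (fun j hj => by rw [hx j fun hjT => hj ⟨⟨j, hjT⟩, rfl⟩, zero_mul]) fun _ => rfl
  have hrestr0 : (fun k : T => x k) = 0 := by
    by_contra hne
    exact hT (exists_vecMul_eq_zero_iff.1 ⟨_, hne, hrestr⟩)
  funext k
  by_cases hk : k ∈ T
  · exact congrFun hrestr0 ⟨k, hk⟩
  · exact hx k hk

/-- Row `a` of `L₁ - L₂` is supported on `{k | (a, k) ∈ S}` and solves the transposed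
homogeneous principal subsystem of `B` there. -/
lemma mul_right_cancel_on_pattern [Fintype ι] {B : Matrix ι ι K}
    (hB : HasNonsingularPrincipalSubmatrices B)
    {S : Set (ι × ι)} {L₁ L₂ : Matrix ι ι K} (h₁ : ∀ p ∉ S, L₁ p.1 p.2 = 0)
    (h₂ : ∀ p ∉ S, L₂ p.1 p.2 = 0) (h : ∀ p ∈ S, (L₁ * B) p.1 p.2 = (L₂ * B) p.1 p.2) :
    L₁ = L₂ := by
  classical
  funext a
  refine sub_eq_zero.1 (eq_zero_of_vecMul_apply_eq_zero (hB {k | (a, k) ∈ S}) ?_ ?_)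
  · intro k hk
    have hk : (a, k) ∉ S := by simpa using hk
    simp [h₁ _ hk, h₂ _ hk]
  · intro k hk
    rw [sub_vecMul, Pi.sub_apply, ← mul_apply_eq_vecMul, ← mul_apply_eq_vecMul, sub_eq_zero]
    exact h (a, k) (by simpa using hk)

lemma mul_left_cancel_on_pattern [Fintype ι] {B : Matrix ι ι K}
    (hB : HasNonsingularPrincipalSubmatrices B)
    {S : Set (ι × ι)} {U₁ U₂ : Matrix ι ι K} (h₁ : ∀ p ∉ S, U₁ p.1 p.2 = 0)
    (h₂ : ∀ p ∉ S, U₂ p.1 p.2 = 0) (h : ∀ p ∈ S, (B * U₁) p.1 p.2 = (B * U₂) p.1 p.2) :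
    U₁ = U₂ := by
  refine transpose_injective (mul_right_cancel_on_pattern hB.transpose (S := Prod.swap ⁻¹' S)
    (fun p hp => h₁ p.swap hp) (fun p hp => h₂ p.swap hp) fun p hp => ?_)
  rw [← transpose_mul, ← transpose_mul]
  exact h p.swap hp

end PrincipalSubmatrices

lemma IsSingularMMatrix.hasNonsingularPrincipalSubmatrices_submatrix_castSucc {m : ℕ}
    {A : Matrix (Fin (m + 1)) (Fin (m + 1)) ℝ} (hA : IsSingularMMatrix A)
    (hirr : IsIrreducibleMatrix A) :
    HasNonsingularPrincipalSubmatrices (A.submatrix Fin.castSucc Fin.castSucc) := fun _ =>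
  hA.det_submatrix_ne_zero hirr (Fin.castSucc_injective m |>.comp Subtype.val_injective)
    (i₀ := Fin.last m) fun ⟨i, hi⟩ => (Fin.castSucc_lt_last i.1).ne hi

section LeadingBlock

variable {R κ κ' : Type*} [NonUnitalNonAssocSemiring R] {m : ℕ}

lemma submatrix_castSucc_mul {L : Matrix (Fin (m + 1)) (Fin (m + 1)) R}
    (hL : ∀ i : Fin m, L i.castSucc (Fin.last m) = 0) (M : Matrix (Fin (m + 1)) κ R)
    (g : κ' → κ) :
    (L * M).submatrix Fin.castSucc g =
      L.submatrix Fin.castSucc Fin.castSucc * M.submatrix Fin.castSucc g := by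
  ext i j
  simp [mul_apply, Fin.sum_univ_castSucc, hL]

lemma submatrix_mul_castSucc {U : Matrix (Fin (m + 1)) (Fin (m + 1)) R}
    (hU : ∀ j : Fin m, U (Fin.last m) j.castSucc = 0) (M : Matrix κ (Fin (m + 1)) R)
    (f : κ' → κ) :
    (M * U).submatrix f Fin.castSucc =
      M.submatrix f Fin.castSucc * U.submatrix Fin.castSucc Fin.castSucc := by
  ext i j
  simp [mul_apply, Fin.sum_univ_castSucc, hU]

end LeadingBlock

theorem fsai_LAU_leading_principal_submatrix (n : ℕ)
    (A : Matrix (Fin n) (Fin n) ℝ)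
    (hA : IsSingularMMatrix A) (hirr : IsIrreducibleMatrix A)
    (SL SU : Set (Fin n × Fin n))
    (L U : Matrix (Fin n) (Fin n) ℝ)
    (hL : IsFSAILowerFactor A L SL) (hU : IsFSAIUpperFactor A U SU)
    (B : Matrix (Fin (n - 1)) (Fin (n - 1)) ℝ)
    (hB : B = A.submatrix (fun i : Fin (n - 1) => (⟨i.1, by omega⟩ : Fin n))
      (fun j : Fin (n - 1) => (⟨j.1, by omega⟩ : Fin n)))
    (LF UF : Matrix (Fin (n - 1)) (Fin (n - 1)) ℝ)
    (hLF : IsFSAILowerFactor B LF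
      {p : Fin (n - 1) × Fin (n - 1) |
        ((⟨p.1.1, by omega⟩ : Fin n), (⟨p.2.1, by omega⟩ : Fin n)) ∈ SL})
    (hUF : IsFSAIUpperFactor B UF
      {p : Fin (n - 1) × Fin (n - 1) |
        ((⟨p.1.1, by omega⟩ : Fin n), (⟨p.2.1, by omega⟩ : Fin n)) ∈ SU}) :
    ∀ i j : Fin (n - 1),
      (L * A * U) (⟨i.1, by omega⟩ : Fin n) (⟨j.1, by omega⟩ : Fin n)
        = (LF * B * UF) i j := by
  obtain _ | m := n
  · exact fun i => i.elim0
  have hL_last (i : Fin m) : L i.castSucc (Fin.last m) = 0 := hL.1 _ _ i.castSucc_lt_last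
  have hU_last (j : Fin m) : U (Fin.last m) j.castSucc = 0 := hU.1 _ _ j.castSucc_lt_last
  have hLA := submatrix_castSucc_mul hL_last A Fin.castSucc
  have hAU := submatrix_mul_castSucc hU_last A Fin.castSucc
  change B = A.submatrix Fin.castSucc Fin.castSucc at hB
  subst hB
  have hB_minors := hA.hasNonsingularPrincipalSubmatrices_submatrix_castSucc hirr
  have hLF_eq : LF = L.submatrix Fin.castSucc Fin.castSucc :=
    mul_right_cancel_on_pattern hB_minors hLF.2.1 (fun p hp => hL.2.1 _ hp) fun p hp => by
      rw [hLF.2.2 p hp, ← hLA]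
      exact ((hL.2.2 (p.1.castSucc, p.2.castSucc) hp).trans
        (by simp only [Fin.castSucc_inj])).symm
  have hUF_eq : UF = U.submatrix Fin.castSucc Fin.castSucc :=
    mul_left_cancel_on_pattern hB_minors hUF.2.1 (fun p hp => hU.2.1 _ hp) fun p hp => by
      rw [hUF.2.2 p hp, ← hAU]
      exact ((hU.2.2 (p.1.castSucc, p.2.castSucc) hp).trans
        (by simp only [Fin.castSucc_inj])).symm
  intro i j
  rw [hLF_eq, hUF_eq, ← hLA, ← submatrix_mul_castSucc hU_last]
  rfl
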